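/- Let a > b > 0 and (x₁/a)² + (y₁/b)² = 1. The area A of the parallelogram with vertices P₁ = (x₁, y₁), P₂ = (−a⁴y₁, b⁴x₁)/√(b⁶x₁² + a⁶y₁²), P₃ = −P₁, P₄ = −P₂ equals 2(b⁴x₁² + a⁴y₁²)/√(b⁶x₁² + a⁶y₁²), and satisfies 4a²b²/(a² + b²) ≤ A ≤ 2ab. -/
import Mathlib

/-- Unsigned shoelace area of a quadrilateral. -/
noncomputable def quadArea (P1 P2 P3 P4 : ℝ × ℝ) : ℝ :=
  |(P1.1*(P2.2 - P4.2) + P2.1*(P3.2 - P1.2) + P3.1*(P4.2 - P2.2)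
      + P4.1*(P1.2 - P3.2))| / 2

/-- The area of the simple billiard 4-periodic (a parallelogram) equals
`2(b⁴x₁² + a⁴y₁²)/√(b⁶x₁² + a⁶y₁²)` and satisfies
`4a²b²/(a² + b²) ≤ A ≤ 2ab`. -/
theorem simple_4periodic_area (a b x₁ y₁ : ℝ) (hab : a > b) (hb : b > 0)
    (hP1 : (x₁/a)^2 + (y₁/b)^2 = 1) :
    let q := Real.sqrt (b^6*x₁^2 + a^6*y₁^2)
    let P1 : ℝ × ℝ := (x₁, y₁)
    let P2 : ℝ × ℝ := (-(a^4*y₁)/q, (b^4*x₁)/q)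
    let P3 : ℝ × ℝ := (-x₁, -y₁)
    let P4 : ℝ × ℝ := ((a^4*y₁)/q, -(b^4*x₁)/q)
    let A := quadArea P1 P2 P3 P4
    A = 2*(b^4*x₁^2 + a^4*y₁^2) / Real.sqrt (b^6*x₁^2 + a^6*y₁^2) ∧
      4*a^2*b^2/(a^2 + b^2) ≤ A ∧ A ≤ 2*a*b := by
  intro q P1 P2 P3 P4 A
  have ha : a > 0 := lt_trans hb hab
  have ha0 : a ≠ 0 := ne_of_gt ha
  have hb0 : b ≠ 0 := ne_of_gt hb
  have hC : b^2*x₁^2 + a^2*y₁^2 = a^2*b^2 := by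
    field_simp at hP1; linarith
  have h44 : (0:ℝ) ≤ (a^4-b^4)*(a^2*y₁^2) :=
    mul_nonneg (sub_nonneg.mpr (pow_le_pow_left₀ hb.le hab.le 4)) (by positivity)
  have h22 : (0:ℝ) ≤ (a^2-b^2)*(a^2*y₁^2) :=
    mul_nonneg (sub_nonneg.mpr (pow_le_pow_left₀ hb.le hab.le 2)) (by positivity)
  have hCb4 : b^4*(b^2*x₁^2 + a^2*y₁^2) = b^4*(a^2*b^2) := by rw [hC]
  have hCb2 : b^2*(b^2*x₁^2 + a^2*y₁^2) = b^2*(a^2*b^2) := by rw [hC]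
  have hD : (0:ℝ) < b^6*x₁^2 + a^6*y₁^2 := by
    nlinarith [h44, hCb4, mul_pos (pow_pos ha 2) (pow_pos hb 6)]
  have hq : 0 < q := Real.sqrt_pos.mpr hD
  have hq2 : q^2 = b^6*x₁^2 + a^6*y₁^2 := Real.sq_sqrt hD.le
  have hN : (0:ℝ) < b^4*x₁^2 + a^4*y₁^2 := by
    nlinarith [h22, hCb2, mul_pos (pow_pos ha 2) (pow_pos hb 4)]
  have hA : A = 2*(b^4*x₁^2 + a^4*y₁^2) / q := by
    show quadArea P1 P2 P3 P4 = _
    unfold quadArea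
    show |x₁*((b^4*x₁)/q - -(b^4*x₁)/q) + (-(a^4*y₁)/q)*(-y₁ - y₁)
        + (-x₁)*(-(b^4*x₁)/q - (b^4*x₁)/q) + ((a^4*y₁)/q)*(y₁ - -y₁)| / 2 = _
    have : x₁*((b^4*x₁)/q - -(b^4*x₁)/q) + (-(a^4*y₁)/q)*(-y₁ - y₁)
        + (-x₁)*(-(b^4*x₁)/q - (b^4*x₁)/q) + ((a^4*y₁)/q)*(y₁ - -y₁)
        = 4*(b^4*x₁^2 + a^4*y₁^2)/q := by field_simp; ring
    rw [this, abs_of_nonneg (by positivity)]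
    field_simp; ring
  refine ⟨hA, ?_, ?_⟩
  · rw [hA, div_le_div_iff₀ (by positivity) hq]
    have key : ((a^2+b^2)*(b^4*x₁^2 + a^4*y₁^2))^2 - (2*a^2*b^2*q)^2
        = (a^2-b^2)^2*(b^4*x₁^2 - a^4*y₁^2)^2 := by
      linear_combination (-4*a^4*b^4)*hq2 + (4*a^2*b^2*(b^6*x₁^2+a^6*y₁^2))*hC
    have hR : (0:ℝ) ≤ (a^2-b^2)^2*(b^4*x₁^2 - a^4*y₁^2)^2 := by positivity
    have h1 : (4*a^2*b^2*q)^2 ≤ (2*(b^4*x₁^2+a^4*y₁^2)*(a^2+b^2))^2 := by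
      linarith [key, hR]
    exact (pow_le_pow_iff_left₀ (by positivity) (by positivity) two_ne_zero).mp h1
  · rw [hA, div_le_iff₀ hq]
    have key : (a*b*q)^2 - (b^4*x₁^2 + a^4*y₁^2)^2
        = a^2*b^2*x₁^2*y₁^2*(a^2-b^2)^2 := by
      linear_combination (a^2*b^2)*hq2 + (-(b^6*x₁^2+a^6*y₁^2))*hC
    have hR : (0:ℝ) ≤ a^2*b^2*x₁^2*y₁^2*(a^2-b^2)^2 := by positivity
    have h1 : (2*(b^4*x₁^2 + a^4*y₁^2))^2 ≤ (2*a*b*q)^2 := by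
      linarith [key, hR]
    exact (pow_le_pow_iff_left₀ (by positivity) (by positivity) two_ne_zero).mp h1
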